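/- arXiv:2212.05151 — 4 statements merged into one kernel-verified Lean document; each statement's English description precedes it below -/
import Mathlib

section
/- For the Bernoulli model, for every n = 1, …, N and every x ∈ {0,1}^n, one has U_n^N(s_n(x)) = C(n, s_n(x)) · V_n^N(x). (Induction invariant established in the proof of Proposition 1.) -/
open scoped BigOperators

/-- number of successes in the sample `x` -/
def count {n : ℕ} (x : Fin n → Bool) : ℕ := (Finset.univ.filter fun i => x i).card

/-- joint Bernoulli density `f_θ^n(x) = θ^{s_n(x)} (1-θ)^{n-s_n(x)}` -/
noncomputable def fpow (θ : ℝ) (n : ℕ) (x : Fin n → Bool) : ℝ :=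
  θ ^ count x * (1 - θ) ^ (n - count x)

/-- binomial pmf `g_θ^n(s) = C(n,s) θ^s (1-θ)^{n-s}` -/
noncomputable def binom (θ : ℝ) (n s : ℕ) : ℝ :=
  (n.choose s : ℝ) * θ ^ s * (1 - θ) ^ (n - s)

/-- `v_n(x) = min_{1≤j≤k} Σ_{i≠j} λ_{ij} f_{θ_i}^n(x)` -/
noncomputable def vfun (k : ℕ) (θs : Fin k → ℝ) (lam : Fin k → Fin k → ℝ)
    (n : ℕ) (x : Fin n → Bool) : ℝ :=
  ⨅ j : Fin k, ∑ i ∈ Finset.univ.filter (· ≠ j), lam i j * fpow (θs i) n x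

/-- `u_n(s) = min_{1≤j≤k} Σ_{i≠j} λ_{ij} g_{θ_i}^n(s)` -/
noncomputable def ufun (k : ℕ) (θs : Fin k → ℝ) (lam : Fin k → Fin k → ℝ)
    (n s : ℕ) : ℝ :=
  ⨅ j : Fin k, ∑ i ∈ Finset.univ.filter (· ≠ j), lam i j * binom (θs i) n s

/-- `f_{γϑ}^n(x) = Σ_i γ_i f_{ϑ_i}^n(x)` -/
noncomputable def fmix (K : ℕ) (γ ϑ : Fin K → ℝ) (n : ℕ) (x : Fin n → Bool) : ℝ :=
  ∑ i, γ i * fpow (ϑ i) n x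

/-- `g_{γϑ}^n(s) = Σ_i γ_i g_{ϑ_i}^n(s)` -/
noncomputable def gmix (K : ℕ) (γ ϑ : Fin K → ℝ) (n s : ℕ) : ℝ :=
  ∑ i, γ i * binom (ϑ i) n s

/-- the backward recursion `V_n^N`: `V_N^N = v_N` and
`V_{n}^N = min{v_{n}, f_{γϑ}^{n} + 𝓘_{n+1} V_{n+1}^N}` for `n < N`, where
`(𝓘_{n+1} V)(x) = V(x,0) + V(x,1)` (the operator `𝓘` is integration with respect to
counting measure on `{0,1}`). -/
noncomputable def V (k : ℕ) (θs : Fin k → ℝ) (lam : Fin k → Fin k → ℝ)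
    (K : ℕ) (γ ϑ : Fin K → ℝ) (N : ℕ) : (n : ℕ) → (Fin n → Bool) → ℝ :=
  fun n x =>
    if _h : n < N then
      min (vfun k θs lam n x)
        (fmix K γ ϑ n x +
          (V k θs lam K γ ϑ N (n + 1) (Fin.snoc x false) +
            V k θs lam K γ ϑ N (n + 1) (Fin.snoc x true)))
    else vfun k θs lam n x
  termination_by n => N - n

/-- the backward recursion `U_n^N`: `U_N^N = u_N` and
`U_{n}^N(s) = min{u_{n}(s), g_{γϑ}^{n}(s) + (𝒥_{n+1} U_{n+1}^N)(s)}` for `n < N`, where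
`(𝒥_{n+1} U)(s) = U(s)·(n+1-s)/(n+1) + U(s+1)·(s+1)/(n+1)`. -/
noncomputable def U (k : ℕ) (θs : Fin k → ℝ) (lam : Fin k → Fin k → ℝ)
    (K : ℕ) (γ ϑ : Fin K → ℝ) (N : ℕ) : ℕ → ℕ → ℝ :=
  fun n s =>
    if _h : n < N then
      min (ufun k θs lam n s)
        (gmix K γ ϑ n s +
          (U k θs lam K γ ϑ N (n + 1) s * ((n + 1 - s : ℕ) : ℝ) / (n + 1) +
            U k θs lam K γ ϑ N (n + 1) (s + 1) * ((s + 1 : ℕ) : ℝ) / (n + 1)))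
    else ufun k θs lam n s
  termination_by n _s => N - n

/-!
Everything depends on `x` only through `s = s_n(x)`, and `g_θ^n(s) = C(n, s) f_θ^n(x)`, so
`u_n(s) = C(n, s) v_n(x)` and `g_{γϑ}^n(s) = C(n, s) f_{γϑ}^n(x)`. Given the identity at level `n + 1`,
`(𝒥_{n+1} U_{n+1}^N)(s)` is `V_{n+1}^N(x,0)` and `V_{n+1}^N(x,1)` weighted by
`C(n+1, s)(n+1-s)/(n+1)` and `C(n+1, s+1)(s+1)/(n+1)`, both equal to `C(n, s)`; since multiplication
by `C(n, s) ≥ 0` commutes with `min`, backward induction on `n` from `N` closes the argument.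
-/

lemma count_snoc {n : ℕ} (x : Fin n → Bool) (b : Bool) :
    count (Fin.snoc x b : Fin (n + 1) → Bool) = count x + b.toNat := by
  simp only [count, Finset.card_filter, Fin.sum_univ_castSucc, Fin.snoc_castSucc, Fin.snoc_last]
  cases b <;> simp

lemma binom_count (θ : ℝ) {n : ℕ} (x : Fin n → Bool) :
    binom θ n (count x) = (n.choose (count x) : ℝ) * fpow θ n x := by
  rw [binom, fpow, mul_assoc]

lemma ufun_count (k : ℕ) (θs : Fin k → ℝ) (lam : Fin k → Fin k → ℝ) {n : ℕ}
    (x : Fin n → Bool) :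
    ufun k θs lam n (count x) = (n.choose (count x) : ℝ) * vfun k θs lam n x := by
  rw [ufun, vfun, Real.mul_iInf_of_nonneg (Nat.cast_nonneg _)]
  refine iInf_congr fun j => ?_
  rw [Finset.mul_sum]
  refine Finset.sum_congr rfl fun i _ => ?_
  rw [binom_count]
  ring

lemma gmix_count (K : ℕ) (γ ϑ : Fin K → ℝ) {n : ℕ} (x : Fin n → Bool) :
    gmix K γ ϑ n (count x) = (n.choose (count x) : ℝ) * fmix K γ ϑ n x := by
  rw [gmix, fmix, Finset.mul_sum]
  refine Finset.sum_congr rfl fun i _ => ?_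
  rw [binom_count]
  ring

lemma choose_succ_mul_add_choose_succ_succ_mul (n s : ℕ) (a b : ℝ) :
    ((n + 1).choose s : ℝ) * a * ((n + 1 - s : ℕ) : ℝ) / (n + 1) +
        ((n + 1).choose (s + 1) : ℝ) * b * ((s + 1 : ℕ) : ℝ) / (n + 1) =
      (n.choose s : ℝ) * (a + b) := by
  have h₀ : ((n + 1).choose s : ℝ) * ((n + 1 - s : ℕ) : ℝ) = (n.choose s : ℝ) * (n + 1) := by
    exact_mod_cast (Nat.choose_mul_succ_eq n s).symm
  have h₁ : ((n + 1).choose (s + 1) : ℝ) * ((s + 1 : ℕ) : ℝ) = (n.choose s : ℝ) * (n + 1) := by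
    rw [mul_comm (n.choose s : ℝ)]
    exact_mod_cast (Nat.add_one_mul_choose_eq n s).symm
  rw [mul_right_comm _ a, mul_right_comm _ b, h₀, h₁]
  field_simp

/-- **Induction invariant in the proof of Proposition 1**: for every `n = 1, …, N` and
every `x ∈ {0,1}^n`, `U_n^N(s_n(x)) = C(n, s_n(x)) · V_n^N(x)`. -/
theorem stmt1 (k : ℕ) (θs : Fin k → ℝ) (lam : Fin k → Fin k → ℝ) (K : ℕ) (γ ϑ : Fin K → ℝ)
    (N : ℕ) (n : ℕ) (x : Fin n → Bool) :
    U k θs lam K γ ϑ N n (count x) =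
      (n.choose (count x) : ℝ) * V k θs lam K γ ϑ N n x := by
  by_cases hn : n < N
  · have h₀ := stmt1 k θs lam K γ ϑ N (n + 1) (Fin.snoc x false)
    have h₁ := stmt1 k θs lam K γ ϑ N (n + 1) (Fin.snoc x true)
    rw [count_snoc, Bool.toNat_false, add_zero] at h₀
    rw [count_snoc, Bool.toNat_true] at h₁
    rw [U, V, dif_pos hn, dif_pos hn, h₀, h₁, ufun_count, gmix_count,
      choose_succ_mul_add_choose_succ_succ_mul, ← mul_add,
      mul_min_of_nonneg _ _ (Nat.cast_nonneg _)]
  · rw [U, V, dif_neg hn, dif_neg hn, ufun_count]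
termination_by N - n
end

section
/- Let θ ∈ [0,1], N ≥ 1, and let ⟨ψ,φ⟩ be a sequential test based on the sufficient statistic with ψ ∈ 𝒮^N. Define a_j^N(s;θ) = g_θ^N(s) φ_N^j(s) for 0 ≤ s ≤ N, and recursively for n = N−1,…,1 and 0 ≤ s ≤ n: a_j^n(s;θ) = g_θ^n(s) ψ_n(s) φ_n^j(s) + [a_j^{n+1}(s;θ)·(n+1−s)/(n+1) + a_j^{n+1}(s+1;θ)·(s+1)/(n+1)]·(1−ψ_n(s)). Then for each j = 1,…,k, a_j^1(0;θ) + a_j^1(1;θ) = Σ_{n=1}^N Σ_{x∈{0,1}^n} s_n^ψ(x) φ_n^j(s_n(x)) θ^{s_n(x)}(1−θ)^{n−s_n(x)}, i.e., the recursion computes the probability of accepting hypothesis H_j under parameter θ. (Proposition 2.) -/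
open scoped BigOperators

/-- `s_m(x)`: number of successes among the first `m` coordinates of `x ∈ {0,1}^n` -/
def prefixCount {n : ℕ} (x : Fin n → Bool) (m : ℕ) : ℕ :=
  (Finset.univ.filter fun i : Fin n => i.val < m ∧ x i).card

/-- `s_n^ψ(x) = (∏_{m=1}^{n-1} (1-ψ_m(s_m(x)))) · ψ_n(s_n(x))`, for a stopping rule `ψ`
based on the sufficient statistic -/
noncomputable def sstop (ψ : ℕ → ℕ → ℝ) (n : ℕ) (x : Fin n → Bool) : ℝ :=
  (∏ m ∈ Finset.range (n - 1), (1 - ψ (m + 1) (prefixCount x (m + 1)))) *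
    ψ n (prefixCount x n)

/-- `ψ ∈ 𝒮^N`: the stopping rule is truncated at `N`, i.e.
`∏_{n=1}^N (1-ψ_n(s_n(x))) = 0` for every `x ∈ {0,1}^N`. -/
def TruncatedAt (ψ : ℕ → ℕ → ℝ) (N : ℕ) : Prop :=
  ∀ x : Fin N → Bool, ∏ n ∈ Finset.range N, (1 - ψ (n + 1) (prefixCount x (n + 1))) = 0

/-- the backward recursion for acceptance probabilities:
`a_j^N(s;θ) = g_θ^N(s) φ_N^j(s)` and, for `n < N`,
`a_j^n(s;θ) = g_θ^n(s) ψ_n(s) φ_n^j(s)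
  + [a_j^{n+1}(s;θ)·(n+1−s)/(n+1) + a_j^{n+1}(s+1;θ)·(s+1)/(n+1)]·(1−ψ_n(s))`. -/
noncomputable def arec {k : ℕ} (θ : ℝ) (ψ : ℕ → ℕ → ℝ) (φ : ℕ → ℕ → Fin k → ℝ)
    (j : Fin k) (N : ℕ) : ℕ → ℕ → ℝ :=
  fun n s =>
    if _h : n < N then
      binom θ n s * ψ n s * φ n s j +
        (arec θ ψ φ j N (n + 1) s * ((n + 1 - s : ℕ) : ℝ) / (n + 1) +
            arec θ ψ φ j N (n + 1) (s + 1) * ((s + 1 : ℕ) : ℝ) / (n + 1)) *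
          (1 - ψ n s)
    else binom θ n s * φ n s j
  termination_by n _s => N - n

open Finset

lemma prefixCount_snoc_of_le {n m : ℕ} (x : Fin n → Bool) (b : Bool) (h : m ≤ n) :
    prefixCount (Fin.snoc x b : Fin (n + 1) → Bool) m = prefixCount x m := by
  unfold prefixCount
  rw [card_filter, card_filter, Fin.sum_univ_castSucc]
  simp [Fin.snoc_castSucc, h]

lemma prefixCount_snoc_succ {n : ℕ} (x : Fin n → Bool) (b : Bool) :
    prefixCount (Fin.snoc x b : Fin (n + 1) → Bool) (n + 1) = prefixCount x n + b.toNat := by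
  unfold prefixCount
  rw [card_filter, card_filter, Fin.sum_univ_castSucc]
  cases b <;> simp [Fin.snoc_castSucc]

lemma sum_fun_succ_eq_sum_snoc {M α : Type*} [AddCommMonoid M] [Fintype α] {n : ℕ}
    (f : (Fin (n + 1) → α) → M) :
    ∑ y, f y = ∑ x : Fin n → α, ∑ b, f (Fin.snoc x b) := by
  rw [← (Fin.snocEquiv fun _ => α).sum_comp, Fintype.sum_prod_type, sum_comm]
  rfl

noncomputable def survival (ψ : ℕ → ℕ → ℝ) {l : ℕ} (x : Fin l → Bool) (n : ℕ) : ℝ :=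
  ∏ m ∈ range n, (1 - ψ (m + 1) (prefixCount x (m + 1)))

lemma survival_zero (ψ : ℕ → ℕ → ℝ) {l : ℕ} (x : Fin l → Bool) : survival ψ x 0 = 1 :=
  prod_range_zero _

lemma survival_succ (ψ : ℕ → ℕ → ℝ) {l : ℕ} (x : Fin l → Bool) (n : ℕ) :
    survival ψ x (n + 1) = survival ψ x n * (1 - ψ (n + 1) (prefixCount x (n + 1))) :=
  prod_range_succ _ _

lemma survival_snoc {l n : ℕ} (ψ : ℕ → ℕ → ℝ) (x : Fin l → Bool) (b : Bool) (h : n ≤ l) :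
    survival ψ (Fin.snoc x b : Fin (l + 1) → Bool) n = survival ψ x n :=
  prod_congr rfl fun m hm => by
    rw [prefixCount_snoc_of_le x b (by simp at hm; omega)]

lemma sstop_eq (ψ : ℕ → ℕ → ℝ) (n : ℕ) (x : Fin n → Bool) :
    sstop ψ n x = survival ψ x (n - 1) * ψ n (prefixCount x n) := rfl

lemma TruncatedAt.survival_eq_zero {ψ : ℕ → ℕ → ℝ} {N : ℕ} (h : TruncatedAt ψ N)
    (x : Fin N → Bool) : survival ψ x N = 0 :=
  h x

/-- `arec` with the binomial coefficient divided out: the same backward recursion for the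
contribution of a single path that has `s` successes at time `n`. -/
noncomputable def arecPath {k : ℕ} (θ : ℝ) (ψ : ℕ → ℕ → ℝ) (φ : ℕ → ℕ → Fin k → ℝ)
    (j : Fin k) (N : ℕ) : ℕ → ℕ → ℝ :=
  fun n s =>
    if _h : n < N then
      θ ^ s * (1 - θ) ^ (n - s) * ψ n s * φ n s j +
        (arecPath θ ψ φ j N (n + 1) s + arecPath θ ψ φ j N (n + 1) (s + 1)) * (1 - ψ n s)
    else θ ^ s * (1 - θ) ^ (n - s) * φ n s j
  termination_by n _s => N - n

section Recursion

variable {k : ℕ} (θ : ℝ) (ψ : ℕ → ℕ → ℝ) (φ : ℕ → ℕ → Fin k → ℝ) (j : Fin k) {N : ℕ}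

lemma arec_of_lt {n : ℕ} (s : ℕ) (h : n < N) :
    arec θ ψ φ j N n s = binom θ n s * ψ n s * φ n s j +
      (arec θ ψ φ j N (n + 1) s * ((n + 1 - s : ℕ) : ℝ) / (n + 1) +
          arec θ ψ φ j N (n + 1) (s + 1) * ((s + 1 : ℕ) : ℝ) / (n + 1)) * (1 - ψ n s) := by
  rw [arec, dif_pos h]

lemma arec_of_le {n : ℕ} (s : ℕ) (h : N ≤ n) : arec θ ψ φ j N n s = binom θ n s * φ n s j := by
  rw [arec, dif_neg h.not_gt]

lemma arecPath_of_lt {n : ℕ} (s : ℕ) (h : n < N) :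
    arecPath θ ψ φ j N n s = θ ^ s * (1 - θ) ^ (n - s) * ψ n s * φ n s j +
      (arecPath θ ψ φ j N (n + 1) s + arecPath θ ψ φ j N (n + 1) (s + 1)) * (1 - ψ n s) := by
  rw [arecPath, dif_pos h]

lemma arecPath_of_le {n : ℕ} (s : ℕ) (h : N ≤ n) :
    arecPath θ ψ φ j N n s = θ ^ s * (1 - θ) ^ (n - s) * φ n s j := by
  rw [arecPath, dif_neg h.not_gt]

end Recursion

lemma choose_succ_mul_sub_div (n s : ℕ) :
    ((n + 1).choose s : ℝ) * ((n + 1 - s : ℕ) : ℝ) / (n + 1) = n.choose s := by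
  rw [div_eq_iff (by positivity), ← Nat.cast_mul, ← Nat.choose_mul_succ_eq]
  push_cast; rfl

lemma choose_succ_succ_mul_div (n s : ℕ) :
    ((n + 1).choose (s + 1) : ℝ) * ((s + 1 : ℕ) : ℝ) / (n + 1) = n.choose s := by
  rw [div_eq_iff (by positivity), ← Nat.cast_mul, ← Nat.add_one_mul_choose_eq]
  push_cast; ring

lemma arec_eq_choose_mul_arecPath {k : ℕ} (θ : ℝ) (ψ : ℕ → ℕ → ℝ) (φ : ℕ → ℕ → Fin k → ℝ)
    (j : Fin k) (N n s : ℕ) :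
    arec θ ψ φ j N n s = n.choose s * arecPath θ ψ φ j N n s := by
  induction hd : N - n generalizing n s with
  | zero =>
    rw [arec_of_le _ _ _ _ _ (by omega), arecPath_of_le _ _ _ _ _ (by omega), binom]
    ring
  | succ d ih =>
    have h : n < N := by omega
    rw [arec_of_lt _ _ _ _ _ h, arecPath_of_lt _ _ _ _ _ h, ih (n + 1) s (by omega),
      ih (n + 1) (s + 1) (by omega), binom]
    linear_combination (arecPath θ ψ φ j N (n + 1) s * (1 - ψ n s)) * choose_succ_mul_sub_div n s +
      (arecPath θ ψ φ j N (n + 1) (s + 1) * (1 - ψ n s)) * choose_succ_succ_mul_div n s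

lemma sum_survival_mul_succ (ψ : ℕ → ℕ → ℝ) (n : ℕ) (f : ℕ → ℝ) :
    ∑ y : Fin (n + 1) → Bool, survival ψ y n * f (prefixCount y (n + 1)) =
      ∑ x : Fin n → Bool, survival ψ x n * (f (prefixCount x n) + f (prefixCount x n + 1)) := by
  rw [sum_fun_succ_eq_sum_snoc]
  refine sum_congr rfl fun x _ => ?_
  simp only [Fintype.sum_bool, survival_snoc ψ x _ le_rfl, prefixCount_snoc_succ,
    Bool.toNat_true, Bool.toNat_false, add_zero]
  ring

lemma sum_survival_mul_arecPath {k : ℕ} (θ : ℝ) {ψ : ℕ → ℕ → ℝ} (φ : ℕ → ℕ → Fin k → ℝ)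
    (j : Fin k) {N : ℕ} (htrunc : TruncatedAt ψ N) {n : ℕ} (hn : n < N) :
    ∑ x : Fin (n + 1) → Bool, survival ψ x n * arecPath θ ψ φ j N (n + 1) (prefixCount x (n + 1)) =
      ∑ m ∈ Icc (n + 1) N, ∑ x : Fin m → Bool,
        sstop ψ m x * φ m (prefixCount x m) j *
          (θ ^ prefixCount x m * (1 - θ) ^ (m - prefixCount x m)) := by
  induction hd : N - (n + 1) generalizing n with
  | zero =>
    obtain rfl : N = n + 1 := by omega
    rw [Icc_self, sum_singleton]
    refine sum_congr rfl fun x _ => ?_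
    have hstop : survival ψ x n * (1 - ψ (n + 1) (prefixCount x (n + 1))) = 0 := by
      rw [← survival_succ, htrunc.survival_eq_zero]
    rw [arecPath_of_le _ _ _ _ _ le_rfl, sstop_eq, Nat.add_sub_cancel]
    linear_combination (θ ^ prefixCount x (n + 1) * (1 - θ) ^ (n + 1 - prefixCount x (n + 1)) *
      φ (n + 1) (prefixCount x (n + 1)) j) * hstop
  | succ d ih =>
    have hlt : n + 1 < N := by omega
    rw [Icc_eq_cons_Ioc (show n + 1 ≤ N from hn), sum_cons, ← Icc_add_one_left_eq_Ioc,
      ← ih hlt (by omega), sum_survival_mul_succ ψ (n + 1), ← sum_add_distrib]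
    refine sum_congr rfl fun x _ => ?_
    rw [arecPath_of_lt _ _ _ _ _ hlt, sstop_eq, Nat.add_sub_cancel, survival_succ]
    ring

theorem stmt2_general (k : ℕ) (θ : ℝ)
    (N : ℕ) (hN : 1 ≤ N)
    (ψ : ℕ → ℕ → ℝ)
    (φ : ℕ → ℕ → Fin k → ℝ)
    (htrunc : TruncatedAt ψ N) (j : Fin k) :
    arec θ ψ φ j N 1 0 + arec θ ψ φ j N 1 1 =
      ∑ n ∈ Finset.Icc 1 N, ∑ x : Fin n → Bool,
        sstop ψ n x * φ n (prefixCount x n) j *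
          (θ ^ prefixCount x n * (1 - θ) ^ (n - prefixCount x n)) := by
  rw [← sum_survival_mul_arecPath θ φ j htrunc hN, sum_survival_mul_succ,
    arec_eq_choose_mul_arecPath, arec_eq_choose_mul_arecPath]
  simp [survival_zero, prefixCount]

/-- **Proposition 2**: for a sequential test `⟨ψ,φ⟩` based on the sufficient statistic
with `ψ ∈ 𝒮^N`, the recursion `a_j^n` computes the probability of accepting
hypothesis `H_j` under parameter `θ`:
`a_j^1(0;θ) + a_j^1(1;θ)
  = Σ_{n=1}^N Σ_{x∈{0,1}^n} s_n^ψ(x) φ_n^j(s_n(x)) θ^{s_n(x)}(1−θ)^{n−s_n(x)}`. -/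
theorem stmt2 (k : ℕ) (hk : 2 ≤ k) (θ : ℝ) (hθ : θ ∈ Set.Icc (0 : ℝ) 1)
    (N : ℕ) (hN : 1 ≤ N)
    (ψ : ℕ → ℕ → ℝ) (hψ : ∀ n s, ψ n s ∈ Set.Icc (0 : ℝ) 1)
    (φ : ℕ → ℕ → Fin k → ℝ) (hφ : ∀ n s j, φ n s j ∈ Set.Icc (0 : ℝ) 1)
    (hφsum : ∀ n s, ∑ j, φ n s j = 1)
    (htrunc : TruncatedAt ψ N) (j : Fin k) :
    arec θ ψ φ j N 1 0 + arec θ ψ φ j N 1 1 =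
      ∑ n ∈ Finset.Icc 1 N, ∑ x : Fin n → Bool,
        sstop ψ n x * φ n (prefixCount x n) j *
          (θ ^ prefixCount x n * (1 - θ) ^ (n - prefixCount x n)) :=
  stmt2_general k θ N hN ψ φ htrunc j
end

section
/- Let θ ∈ [0,1], N ≥ 1, and let ψ be a stopping rule based on the sufficient statistic. Define c_N^N(s;θ) = g_θ^N(s)(1−ψ_N(s)) for 0 ≤ s ≤ N, and recursively for n = N−1,…,1 and 0 ≤ s ≤ n: c_n^N(s;θ) = [g_θ^n(s) + c_{n+1}^N(s;θ)·(n+1−s)/(n+1) + c_{n+1}^N(s+1;θ)·(s+1)/(n+1)]·(1−ψ_n(s)). Then 1 + c_1^N(0;θ) + c_1^N(1;θ) = E_θ min{τ_ψ, N+1} = 1 + Σ_{m=1}^N Σ_{x∈{0,1}^m} [∏_{n=1}^m (1−ψ_n(s_n(x)))] θ^{s_m(x)}(1−θ)^{m−s_m(x)}. (Proposition 4.) -/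
open scoped BigOperators

/-- the backward recursion for the (truncated) expected sample size:
`c_N^N(s;θ) = g_θ^N(s)(1−ψ_N(s))` and, for `n < N`,
`c_n^N(s;θ) = [g_θ^n(s) + c_{n+1}^N(s;θ)·(n+1−s)/(n+1)
  + c_{n+1}^N(s+1;θ)·(s+1)/(n+1)]·(1−ψ_n(s))`. -/
noncomputable def crec (θ : ℝ) (ψ : ℕ → ℕ → ℝ) (N : ℕ) : ℕ → ℕ → ℝ :=
  fun n s =>
    if _h : n < N then
      (binom θ n s +
          (crec θ ψ N (n + 1) s * ((n + 1 - s : ℕ) : ℝ) / (n + 1) +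
            crec θ ψ N (n + 1) (s + 1) * ((s + 1 : ℕ) : ℝ) / (n + 1))) *
        (1 - ψ n s)
    else binom θ n s * (1 - ψ n s)
  termination_by n _s => N - n

/-!
Splitting each path in `{0,1}^m` at its first observation turns the sum over paths into a
backward recursion. For a path that has reached time `n` with `s` successes, the total weight
`V(n, s)` of not having stopped along its continuations up to time `N` satisfies
`V(n, s) = (1 - ψ_n(s)) (θ^s (1-θ)^(n-s) + V(n+1, s) + V(n+1, s+1))`, and the binomial identities
`C(n+1, s) (n+1-s) = C(n+1, s+1) (s+1) = (n+1) C(n, s)` show that `c_n^N(s; θ) = C(n, s) V(n, s)`.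
The right-hand side is `V(1, 0) + V(1, 1)`.
-/

open Finset

lemma prefixCount_zero {n : ℕ} (x : Fin n → Bool) : prefixCount x 0 = 0 := by
  simp [prefixCount]

lemma prefixCount_le {n : ℕ} (x : Fin n → Bool) (m : ℕ) : prefixCount x m ≤ m := by
  calc prefixCount x m ≤ (range m).card :=
        card_le_card_of_injOn Fin.val (fun i hi => by simp_all) Fin.val_injective.injOn
    _ = m := card_range m

lemma prefixCount_cons {m : ℕ} (b : Bool) (y : Fin m → Bool) (k : ℕ) :
    prefixCount (Fin.cons b y : Fin (m + 1) → Bool) (k + 1) = b.toNat + prefixCount y k := by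
  simp only [prefixCount, card_filter, Fin.sum_univ_succ, Fin.cons_zero, Fin.cons_succ,
    Fin.val_zero, Fin.val_succ, Nat.add_lt_add_iff_right]
  cases b <;> simp

lemma Fin.sum_fun_succ {α M : Type*} [Fintype α] [AddCommMonoid M] {m : ℕ}
    (F : (Fin (m + 1) → α) → M) : ∑ x, F x = ∑ a, ∑ y : Fin m → α, F (Fin.cons a y) := by
  rw [← (Fin.consEquiv fun _ => α).sum_comp, Fintype.sum_prod_type]
  rfl

lemma Nat.cast_choose_succ_mul_sub_div (n s : ℕ) (x : ℝ) :
    (n + 1).choose s * x * ((n + 1 - s : ℕ) : ℝ) / (n + 1) = n.choose s * x := by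
  have h := Nat.choose_mul_succ_eq n s
  rw [div_eq_iff (by positivity), mul_right_comm, ← Nat.cast_mul, ← h]
  push_cast
  ring

lemma Nat.cast_choose_succ_succ_mul_div (n s : ℕ) (x : ℝ) :
    (n + 1).choose (s + 1) * x * ((s + 1 : ℕ) : ℝ) / (n + 1) = n.choose s * x := by
  have h := Nat.add_one_mul_choose_eq n s
  rw [div_eq_iff (by positivity), mul_right_comm, ← Nat.cast_mul, ← h]
  push_cast
  ring

section PathSums

variable (θ : ℝ) (ψ : ℕ → ℕ → ℝ)

/-- Weight of a continuation `x` of a path that is at time `n` with `s` successes and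
`f` failures. -/
noncomputable def pathWeight (n s f : ℕ) {m : ℕ} (x : Fin m → Bool) : ℝ :=
  (∏ k ∈ range m, (1 - ψ (n + k + 1) (s + prefixCount x (k + 1)))) *
    (θ ^ (s + prefixCount x m) * (1 - θ) ^ (f + (m - prefixCount x m)))

noncomputable def continuationSum (n s f r : ℕ) : ℝ :=
  ∑ m ∈ range r, ∑ x : Fin (m + 1) → Bool, pathWeight θ ψ n s f x

noncomputable def survivalSum (n s f r : ℕ) : ℝ :=
  (1 - ψ n s) * (θ ^ s * (1 - θ) ^ f + continuationSum θ ψ n s f r)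

lemma pathWeight_elim0 (n s f : ℕ) (x : Fin 0 → Bool) :
    pathWeight θ ψ n s f x = θ ^ s * (1 - θ) ^ f := by
  simp [pathWeight, prefixCount_zero]

lemma pathWeight_cons (n s f : ℕ) {m : ℕ} (b : Bool) (y : Fin m → Bool) :
    pathWeight θ ψ n s f (Fin.cons b y : Fin (m + 1) → Bool) =
      (1 - ψ (n + 1) (s + b.toNat)) *
        pathWeight θ ψ (n + 1) (s + b.toNat) (f + (1 - b.toNat)) y := by
  have hle := prefixCount_le y m
  have hb := Bool.toNat_le b
  simp only [pathWeight, prod_range_succ', prefixCount_cons, prefixCount_zero]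
  rw [show f + (m + 1 - (b.toNat + prefixCount y m)) = f + (1 - b.toNat) + (m - prefixCount y m) by
    omega]
  simp only [add_assoc, add_zero, add_comm 1]
  ring

lemma continuationSum_zero (n s f : ℕ) : continuationSum θ ψ n s f 0 = 0 := by
  simp [continuationSum]

lemma continuationSum_succ (n s f r : ℕ) :
    continuationSum θ ψ n s f (r + 1) =
      ∑ b : Bool, survivalSum θ ψ (n + 1) (s + b.toNat) (f + (1 - b.toNat)) r := by
  simp only [continuationSum, survivalSum, sum_range_succ' _ r, Fin.sum_fun_succ,
    pathWeight_cons, ← mul_sum]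
  rw [sum_comm, ← sum_add_distrib]
  refine sum_congr rfl fun b _ => ?_
  rw [Fintype.sum_unique, pathWeight_elim0, mul_add, mul_sum, add_comm]

end PathSums

lemma crec_eq_choose_mul_survivalSum (θ : ℝ) (ψ : ℕ → ℕ → ℝ) {N n s : ℕ} (hs : s ≤ n)
    (hn : n ≤ N) : crec θ ψ N n s = n.choose s * survivalSum θ ψ n s (n - s) (N - n) := by
  induction h : N - n generalizing n s with
  | zero =>
    obtain rfl : n = N := by omega
    rw [crec, dif_neg (lt_irrefl n), survivalSum, continuationSum_zero, binom]
    ring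
  | succ k ih =>
    rw [crec, dif_pos (by omega), ih (n := n + 1) (by omega) (by omega) (by omega),
      ih (n := n + 1) (s := s + 1) (by omega) (by omega) (by omega),
      Nat.cast_choose_succ_mul_sub_div, Nat.cast_choose_succ_succ_mul_div, binom]
    conv_rhs => rw [survivalSum, continuationSum_succ, Fintype.sum_bool]
    simp only [Bool.toNat_true, Bool.toNat_false, Nat.add_sub_add_right, tsub_self, add_zero,
      show n - s + (1 - 0) = n + 1 - s by omega]
    ring

lemma sum_Icc_eq_continuationSum (θ : ℝ) (ψ : ℕ → ℕ → ℝ) (N : ℕ) :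
    ∑ m ∈ Icc 1 N, ∑ x : Fin m → Bool,
        (∏ n ∈ range m, (1 - ψ (n + 1) (prefixCount x (n + 1)))) *
          (θ ^ prefixCount x m * (1 - θ) ^ (m - prefixCount x m)) =
      continuationSum θ ψ 0 0 0 N := by
  rw [← Ico_add_one_right_eq_Icc, continuationSum, range_eq_Ico]
  simp only [pathWeight, zero_add]
  exact (sum_Ico_add' (fun m => ∑ x : Fin m → Bool,
    (∏ n ∈ range m, (1 - ψ (n + 1) (prefixCount x (n + 1)))) *
      (θ ^ prefixCount x m * (1 - θ) ^ (m - prefixCount x m))) 0 N 1).symm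

theorem stmt5_general (θ : ℝ)
    (N : ℕ) (hN : 1 ≤ N)
    (ψ : ℕ → ℕ → ℝ) :
    1 + crec θ ψ N 1 0 + crec θ ψ N 1 1 =
      1 + ∑ m ∈ Finset.Icc 1 N, ∑ x : Fin m → Bool,
        (∏ n ∈ Finset.range m, (1 - ψ (n + 1) (prefixCount x (n + 1)))) *
          (θ ^ prefixCount x m * (1 - θ) ^ (m - prefixCount x m)) := by
  obtain ⟨r, rfl⟩ : ∃ r, N = r + 1 := ⟨N - 1, by omega⟩
  rw [sum_Icc_eq_continuationSum, continuationSum_succ, Fintype.sum_bool,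
    crec_eq_choose_mul_survivalSum θ ψ zero_le_one hN,
    crec_eq_choose_mul_survivalSum θ ψ le_rfl hN]
  simp only [Bool.toNat_true, Bool.toNat_false, Nat.choose_self, Nat.choose_zero_right,
    Nat.cast_one, one_mul, Nat.add_sub_cancel, tsub_self, zero_add, tsub_zero]
  ring

/-- **Proposition 4**: the recursion `c_n^N` computes `E_θ min{τ_ψ, N+1}`:
`1 + c_1^N(0;θ) + c_1^N(1;θ) = E_θ min{τ_ψ, N+1}
  = 1 + Σ_{m=1}^N Σ_{x∈{0,1}^m} [∏_{n=1}^m (1−ψ_n(s_n(x)))] θ^{s_m(x)}(1−θ)^{m−s_m(x)}`,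
the sum over `m` being the sum of the probabilities `P_θ(τ_ψ > m)`. -/
theorem stmt5 (θ : ℝ) (hθ : θ ∈ Set.Icc (0 : ℝ) 1)
    (N : ℕ) (hN : 1 ≤ N)
    (ψ : ℕ → ℕ → ℝ) (hψ : ∀ n s, ψ n s ∈ Set.Icc (0 : ℝ) 1) :
    1 + crec θ ψ N 1 0 + crec θ ψ N 1 1 =
      1 + ∑ m ∈ Finset.Icc 1 N, ∑ x : Fin m → Bool,
        (∏ n ∈ Finset.range m, (1 - ψ (n + 1) (prefixCount x (n + 1)))) *
          (θ ^ prefixCount x m * (1 - θ) ^ (m - prefixCount x m)) :=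
  stmt5_general θ N hN ψ
end

section
/- Let (X, 𝒜, μ) be a σ-finite measure space, k ≥ 2, and let f_1,…,f_k : X → [0,∞) be measurable with ∫ f_l dμ = 1 for each l, such that for every l ≠ i the set {x : f_l(x) ≠ f_i(x)} has positive μ-measure. Fix i ≠ j and numbers λ_{lm} ≥ 0 with λ_{ij} > 0. For x ∈ X^n write f_l^n(x) = ∏_{m=1}^n f_l(x_m), and let A_n = {x ∈ X^n : Σ_{l≠j} λ_{lj} f_l^n(x) ≤ Σ_{l≠i} λ_{li} f_l^n(x)}. Then ∫_{A_n} f_i^n dμ^n → 0 as n → ∞. (Key step in the Appendix: the error probability α_{ij}(n,φ) of the fixed-sample-size test with the optimal decision rule is bounded by this quantity and tends to 0.) -/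
open MeasureTheory Filter

/-!
On `A_n` the weight `λ_{ij} f_i^n` is dominated by `Σ_{l ≠ i} λ_{li} f_l^n`, and
`a ≤ Σ b_l` with `a, b_l ≥ 0` implies `a ≤ Σ min(a, b_l) ≤ Σ √(a b_l)`. Hence on `A_n`
`f_i^n ≤ Σ_{l ≠ i} √(λ_{li}/λ_{ij}) (√(f_i f_l))^n`, and the integral of the right-hand side
over `X^n` is `Σ_{l ≠ i} √(λ_{li}/λ_{ij}) ρ_l^n`, where `ρ_l = ∫ √(f_i f_l) dμ` is the
Bhattacharyya coefficient. Since `∫ (√f_i - √f_l)² dμ = 2 - 2ρ_l` and `f_i ≠ f_l` on a set of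
positive measure, `ρ_l < 1`, so the bound tends to `0`.
-/

namespace Real

lemma min_le_sqrt_mul {a b : ℝ} (ha : 0 ≤ a) (hb : 0 ≤ b) : min a b ≤ √(a * b) :=
  Real.le_sqrt_of_sq_le <| by
    rw [sq]
    exact mul_le_mul (min_le_left a b) (min_le_right a b) (le_min ha hb) ha

lemma sq_sqrt_sub_sqrt {a b : ℝ} (ha : 0 ≤ a) (hb : 0 ≤ b) :
    (√a - √b) ^ 2 = a + b - 2 * √(a * b) := by
  rw [sub_sq, Real.sq_sqrt ha, Real.sq_sqrt hb, Real.sqrt_mul ha]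
  ring

lemma sqrt_mul_le_add_div_two {a b : ℝ} (ha : 0 ≤ a) (hb : 0 ≤ b) :
    √(a * b) ≤ (a + b) / 2 := by
  nlinarith [sq_sqrt_sub_sqrt ha hb, sq_nonneg (√a - √b)]

end Real

lemma le_sum_min_of_le_sum {ι : Type*} (s : Finset ι) {a : ℝ} {b : ι → ℝ} (ha : 0 ≤ a)
    (hb : ∀ l ∈ s, 0 ≤ b l) (h : a ≤ ∑ l ∈ s, b l) : a ≤ ∑ l ∈ s, min a (b l) := by
  by_cases hle : ∃ l ∈ s, a ≤ b l
  · obtain ⟨l, hl, hab⟩ := hle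
    calc a = min a (b l) := (min_eq_left hab).symm
      _ ≤ ∑ l ∈ s, min a (b l) :=
        Finset.single_le_sum (fun l hl => le_min ha (hb l hl)) hl
  · push Not at hle
    rwa [Finset.sum_congr rfl fun l hl => min_eq_right (hle l hl).le]

lemma le_sum_sqrt_mul_sqrt_of_le_sum {ι : Type*} (s : Finset ι) {a : ℝ} {w b : ι → ℝ}
    (ha : 0 ≤ a) (hw : ∀ l ∈ s, 0 ≤ w l) (hb : ∀ l ∈ s, 0 ≤ b l)
    (h : a ≤ ∑ l ∈ s, w l * b l) : a ≤ ∑ l ∈ s, √(w l) * √(a * b l) := by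
  have hwb : ∀ l ∈ s, 0 ≤ w l * b l := fun l hl => mul_nonneg (hw l hl) (hb l hl)
  calc a ≤ ∑ l ∈ s, min a (w l * b l) := le_sum_min_of_le_sum s ha hwb h
    _ ≤ ∑ l ∈ s, √(a * (w l * b l)) :=
      Finset.sum_le_sum fun l hl => Real.min_le_sqrt_mul ha (hwb l hl)
    _ = ∑ l ∈ s, √(w l) * √(a * b l) :=
      Finset.sum_congr rfl fun l hl => by rw [mul_left_comm, Real.sqrt_mul (hw l hl)]

/-- The pointwise inequality on the decision region `A_n`, for arbitrary values `P l ≥ 0` of the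
densities. -/
lemma le_sum_sqrt_of_decision_le {ι : Type*} [Fintype ι] [DecidableEq ι] {P : ι → ℝ}
    (hP : ∀ l, 0 ≤ P l) {lam : ι → ι → ℝ} (hlam : ∀ l m, 0 ≤ lam l m) {i j : ι} (hij : i ≠ j)
    (hij0 : 0 < lam i j)
    (hdec : ∑ l ∈ Finset.univ.filter (· ≠ j), lam l j * P l ≤
      ∑ l ∈ Finset.univ.filter (· ≠ i), lam l i * P l) :
    P i ≤ ∑ l ∈ Finset.univ.filter (· ≠ i), √(lam l i / lam i j) * √(P i * P l) := by
  refine le_sum_sqrt_mul_sqrt_of_le_sum _ (hP i)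
    (fun l _ => div_nonneg (hlam l i) hij0.le) (fun l _ => hP l) ?_
  have hi : lam i j * P i ≤ ∑ l ∈ Finset.univ.filter (· ≠ j), lam l j * P l :=
    Finset.single_le_sum (f := fun l => lam l j * P l)
      (fun l _ => mul_nonneg (hlam l j) (hP l)) (by simpa using hij)
  simp_rw [div_mul_eq_mul_div, ← Finset.sum_div]
  rw [le_div_iff₀ hij0]
  linarith

section Integrals

variable {X : Type*} [MeasurableSpace X] {μ : Measure X}

lemma integrable_sqrt_mul {f g : X → ℝ} (hf : Integrable f μ) (hg : Integrable g μ)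
    (hf0 : ∀ x, 0 ≤ f x) (hg0 : ∀ x, 0 ≤ g x) : Integrable (fun x => √(f x * g x)) μ :=
  ((hf.add hg).div_const 2).mono' (hf.aemeasurable.mul hg.aemeasurable).sqrt.aestronglyMeasurable
    (Eventually.of_forall fun x => by
      rw [Real.norm_of_nonneg (Real.sqrt_nonneg _)]
      exact Real.sqrt_mul_le_add_div_two (hf0 x) (hg0 x))

lemma integral_sqrt_mul_lt_one {f g : X → ℝ} (hf0 : ∀ x, 0 ≤ f x) (hg0 : ∀ x, 0 ≤ g x)
    (hf : ∫ x, f x ∂μ = 1) (hg : ∫ x, g x ∂μ = 1) (hfg : 0 < μ {x | f x ≠ g x}) :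
    ∫ x, √(f x * g x) ∂μ < 1 := by
  have hfi : Integrable f μ := .of_integral_ne_zero (by rw [hf]; exact one_ne_zero)
  have hgi : Integrable g μ := .of_integral_ne_zero (by rw [hg]; exact one_ne_zero)
  have hfgi := integrable_sqrt_mul hfi hgi hf0 hg0
  have hsq : (fun x => (√(f x) - √(g x)) ^ 2) = fun x => f x + g x - 2 * √(f x * g x) :=
    funext fun x => Real.sq_sqrt_sub_sqrt (hf0 x) (hg0 x)
  have hsqi : Integrable (fun x => (√(f x) - √(g x)) ^ 2) μ := by
    rw [hsq]
    exact (hfi.add hgi).sub (hfgi.const_mul 2)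
  have hellinger_pos : 0 < ∫ x, (√(f x) - √(g x)) ^ 2 ∂μ := by
    rw [integral_pos_iff_support_of_nonneg (fun x => sq_nonneg _) hsqi]
    refine hfg.trans_le (measure_mono fun x hx h0 => hx ?_)
    exact (Real.sqrt_inj (hf0 x) (hg0 x)).mp (sub_eq_zero.mp (pow_eq_zero_iff two_ne_zero |>.mp h0))
  have hsumi : Integrable (fun x => f x + g x) μ := hfi.add hgi
  rw [hsq, integral_sub hsumi (hfgi.const_mul 2), integral_add hfi hgi, hf, hg,
    integral_const_mul] at hellinger_pos
  linarith

variable [SigmaFinite μ]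

lemma setIntegral_pi_prod_le_sum_pow {κ ι : Type*} [Fintype κ] (s : Finset ι) {F : X → ℝ}
    (hF : Integrable F μ) {c : ι → ℝ} (hc : ∀ l ∈ s, 0 ≤ c l) {G : ι → X → ℝ}
    (hG : ∀ l ∈ s, Integrable (G l) μ) (hG0 : ∀ l ∈ s, ∀ x, 0 ≤ G l x) {A : Set (κ → X)}
    (hA : MeasurableSet A) (hFG : ∀ x ∈ A, ∏ m, F (x m) ≤ ∑ l ∈ s, c l * ∏ m, G l (x m)) :
    ∫ x in A, ∏ m, F (x m) ∂(Measure.pi fun _ => μ) ≤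
      ∑ l ∈ s, c l * (∫ x, G l x ∂μ) ^ Fintype.card κ := by
  have hGi : ∀ l ∈ s, Integrable (fun x : κ → X => c l * ∏ m, G l (x m))
      (Measure.pi fun _ => μ) :=
    fun l hl => (Integrable.fintype_prod fun _ => hG l hl).const_mul (c l)
  calc ∫ x in A, ∏ m, F (x m) ∂(Measure.pi fun _ => μ)
      ≤ ∫ x in A, ∑ l ∈ s, c l * ∏ m, G l (x m) ∂(Measure.pi fun _ => μ) :=
        setIntegral_mono_on (Integrable.fintype_prod fun _ => hF).integrableOn
          (integrable_finsetSum s hGi).integrableOn hA hFG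
    _ ≤ ∫ x, ∑ l ∈ s, c l * ∏ m, G l (x m) ∂(Measure.pi fun _ => μ) :=
        setIntegral_le_integral (integrable_finsetSum s hGi) <| Eventually.of_forall fun x =>
          Finset.sum_nonneg fun l hl =>
            mul_nonneg (hc l hl) (Finset.prod_nonneg fun m _ => hG0 l hl (x m))
    _ = ∑ l ∈ s, c l * (∫ x, G l x ∂μ) ^ Fintype.card κ := by
        rw [integral_finsetSum s hGi]
        exact Finset.sum_congr rfl fun l _ => by
          rw [integral_const_mul, integral_fintype_prod_eq_pow]

end Integrals

theorem stmt11_general {X : Type*} [MeasurableSpace X] (μ : Measure X) [SigmaFinite μ]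
    (k : ℕ) (f : Fin k → X → ℝ)
    (hmeas : ∀ l, Measurable (f l)) (hnonneg : ∀ l x, 0 ≤ f l x)
    (hint : ∀ l, ∫ x, f l x ∂μ = 1)
    (hdiff : ∀ l i, l ≠ i → 0 < μ {x | f l x ≠ f i x})
    (i j : Fin k) (hij : i ≠ j)
    (lam : Fin k → Fin k → ℝ) (hlam : ∀ l m, 0 ≤ lam l m) (hij0 : 0 < lam i j) :
    Tendsto
      (fun n : ℕ =>
        ∫ x in {x : Fin n → X |
            ∑ l ∈ Finset.univ.filter (· ≠ j), lam l j * ∏ m, f l (x m) ≤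
              ∑ l ∈ Finset.univ.filter (· ≠ i), lam l i * ∏ m, f l (x m)},
          (∏ m, f i (x m)) ∂(Measure.pi fun _ : Fin n => μ))
      atTop (nhds 0) := by
  set s := Finset.univ.filter (· ≠ i)
  set c : Fin k → ℝ := fun l => √(lam l i / lam i j)
  set ρ : Fin k → ℝ := fun l => ∫ x, √(f i x * f l x) ∂μ
  have hρ : ∀ l ∈ s, ρ l < 1 := fun l hl =>
    integral_sqrt_mul_lt_one (hnonneg i) (hnonneg l) (hint i) (hint l)
      (hdiff i l (Finset.mem_filter.mp hl).2.symm)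
  have hbound : Tendsto (fun n : ℕ => ∑ l ∈ s, c l * ρ l ^ n) atTop (nhds 0) := by
    simpa only [mul_zero, Finset.sum_const_zero] using tendsto_finsetSum s fun l hl => (tendsto_pow_atTop_nhds_zero_of_lt_one
      (integral_nonneg fun x => Real.sqrt_nonneg _) (hρ l hl)).const_mul (c l)
  refine squeeze_zero (fun n => integral_nonneg fun x => Finset.prod_nonneg fun m _ =>
    hnonneg i (x m)) (fun n => ?_) hbound
  set A : Set (Fin n → X) := {x | ∑ l ∈ Finset.univ.filter (· ≠ j), lam l j * ∏ m, f l (x m) ≤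
    ∑ l ∈ Finset.univ.filter (· ≠ i), lam l i * ∏ m, f l (x m)}
  have hA : MeasurableSet A := measurableSet_le (by fun_prop) (by fun_prop)
  have hdom : ∀ x ∈ A, ∏ m, f i (x m) ≤ ∑ l ∈ s, c l * ∏ m, √(f i (x m) * f l (x m)) := by
    intro x hx
    have hP := le_sum_sqrt_of_decision_le
      (fun l => Finset.prod_nonneg fun m _ => hnonneg l (x m)) hlam hij hij0 hx
    simpa only [← Finset.prod_mul_distrib, Real.sqrt_prod _ fun m _ =>
      mul_nonneg (hnonneg i (x m)) (hnonneg _ (x m))] using hP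
  have hfi : ∀ l, Integrable (f l) μ := fun l =>
    .of_integral_ne_zero (by rw [hint l]; exact one_ne_zero)
  simpa only [Fintype.card_fin] using setIntegral_pi_prod_le_sum_pow s (hfi i)
    (fun l _ => Real.sqrt_nonneg _)
    (fun l _ => integrable_sqrt_mul (hfi i) (hfi l) (hnonneg i) (hnonneg l))
    (fun l _ x => Real.sqrt_nonneg _) hA hdom

/-- **Key step in the Appendix**: with probability densities `f_1,…,f_k` (pairwise
different on sets of positive measure), `λ_{lm} ≥ 0`, `λ_{ij} > 0` for fixed `i ≠ j`,
and `A_n = {x ∈ X^n : Σ_{l≠j} λ_{lj} f_l^n(x) ≤ Σ_{l≠i} λ_{li} f_l^n(x)}`, one has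
`∫_{A_n} f_i^n dμ^n → 0` as `n → ∞`. -/
theorem stmt11 {X : Type*} [MeasurableSpace X] (μ : Measure X) [SigmaFinite μ]
    (k : ℕ) (hk : 2 ≤ k) (f : Fin k → X → ℝ)
    (hmeas : ∀ l, Measurable (f l)) (hnonneg : ∀ l x, 0 ≤ f l x)
    (hint : ∀ l, ∫ x, f l x ∂μ = 1)
    (hdiff : ∀ l i, l ≠ i → 0 < μ {x | f l x ≠ f i x})
    (i j : Fin k) (hij : i ≠ j)
    (lam : Fin k → Fin k → ℝ) (hlam : ∀ l m, 0 ≤ lam l m) (hij0 : 0 < lam i j) :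
    Tendsto
      (fun n : ℕ =>
        ∫ x in {x : Fin n → X |
            ∑ l ∈ Finset.univ.filter (· ≠ j), lam l j * ∏ m, f l (x m) ≤
              ∑ l ∈ Finset.univ.filter (· ≠ i), lam l i * ∏ m, f l (x m)},
          (∏ m, f i (x m)) ∂(Measure.pi fun _ : Fin n => μ))
      atTop (nhds 0) :=
  stmt11_general μ k f hmeas hnonneg hint hdiff i j hij lam hlam hij0
end
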